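/- Let a, b, c, s and r_1,…,r_s be positive integers with a ≤ b ≤ c and a + b ≥ c + 2. Then N(K_{r_1,…,r_s}, K_1 ∨ (K_{a-1} + K_{b-1})) ≤ N(K_{r_1,…,r_s}, K_1 ∨ (K_{c-1} + K_{a+b-c-1})). -/

import Mathlib

open SimpleGraph

/-- `N(H, G)`: the number of subgraphs of `G` isomorphic to `H`. -/
noncomputable def copyCount {α β : Type*} (H : SimpleGraph α) (G : SimpleGraph β) : ℕ :=
  Nat.card {G' : G.Subgraph // Nonempty (G'.coe ≃g H)}

/-- The complete multipartite graph `K_{r 0, …, r (s-1)}` with parts of sizes `r i`. -/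
abbrev KR {s : ℕ} (r : Fin s → ℕ) : SimpleGraph (Σ i : Fin s, Fin (r i)) :=
  completeMultipartiteGraph fun i => Fin (r i)

/-- Adjacency pattern of `G(n,c,k)` on indices: the first `k` indices are dominating and
the first `c+1-k` indices form a clique. -/
def gAdjNat (c k a b : ℕ) : Prop :=
  a < k ∨ b < k ∨ (a < c + 1 - k ∧ b < c + 1 - k)

/-- The graph `G(n,c,k) = K_k ∨ (K_{c+1-2k} + \overline{K_{n-c-1+k}})`: the first `k`
vertices are dominating, the first `c+1-k` vertices form a clique `K_k ∨ K_{c+1-2k}`, and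
the remaining `n-c-1+k` vertices are independent, adjacent exactly to the first `k`. -/
def gGraph (n c k : ℕ) : SimpleGraph (Fin n) where
  Adj v w := v ≠ w ∧ gAdjNat c k v.val w.val
  symm := by constructor; intro v w h; refine ⟨Ne.symm h.1, ?_⟩; unfold gAdjNat at *; tauto
  loopless := by constructor; intro v h; exact h.1 rfl

/-- `g_{r_1,…,r_s}(n,c,k)`: the number of copies of `K_{r_1,…,r_s}` in `G(n,c,k)`. -/
noncomputable def gCount {s : ℕ} (r : Fin s → ℕ) (n c k : ℕ) : ℕ :=
  _root_.copyCount (KR r) (gGraph n c k)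

/-- A graph has circumference `c` if it has a cycle of length `c` and no longer cycle. -/
def HasCircumference {V : Type*} (G : SimpleGraph V) (c : ℕ) : Prop :=
  (∃ (v : V) (w : G.Walk v v), w.IsCycle ∧ w.length = c) ∧
    ∀ (v : V) (w : G.Walk v v), w.IsCycle → w.length ≤ c

/-- A graph has detour order `p` if a longest path has `p` vertices. -/
def HasDetourOrder {V : Type*} (G : SimpleGraph V) (p : ℕ) : Prop :=
  (∃ (u v : V) (w : G.Walk u v), w.IsPath ∧ w.length + 1 = p) ∧
    ∀ (u v : V) (w : G.Walk u v), w.IsPath → w.length + 1 ≤ p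

/-- A graph is 2-connected if it has at least 3 vertices and deleting any single
vertex leaves a connected graph. -/
def TwoConnected {V : Type*} [Fintype V] (G : SimpleGraph V) : Prop :=
  3 ≤ Fintype.card V ∧ ∀ v : V, (G.induce ({v}ᶜ : Set V)).Connected

/-- A graph is traceable if it has a Hamiltonian path. -/
def Traceable {V : Type*} [DecidableEq V] (G : SimpleGraph V) : Prop :=
  ∃ (u v : V) (w : G.Walk u v), w.IsHamiltonian

/-- A graph has matching number `m` if it has a matching with `m` edges and no larger one. -/
def HasMatchingNumber {V : Type*} (G : SimpleGraph V) (m : ℕ) : Prop :=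
  (∃ M : G.Subgraph, M.IsMatching ∧ Nat.card M.edgeSet = m) ∧
    ∀ M : G.Subgraph, M.IsMatching → Nat.card M.edgeSet ≤ m

/-- The graph `K_1 ∨ (K_{a-1} + K_{b-1})` on `a + b - 1` vertices: vertex `0` is
dominating, vertices `1,…,a-1` form a clique, and vertices `a,…,a+b-2` form a clique. -/
def joinTwoCliques (a b : ℕ) : SimpleGraph (Fin (a + b - 1)) where
  Adj v w := v ≠ w ∧
    (v.val = 0 ∨ w.val = 0 ∨ (v.val < a ∧ w.val < a) ∨ (a ≤ v.val ∧ a ≤ w.val))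
  symm := by constructor; intro v w h; exact ⟨Ne.symm h.1, by tauto⟩
  loopless := by constructor; intro v h; exact h.1 rfl

/-!
The non-adjacency relation of a complete multipartite graph is transitive. Hence a copy of
`K_{r_1,…,r_s}` in `K_1 ∨ (K_{a-1} + K_{b-1})` either has all its edges at the apex `0` (a star),
or lies inside one of the two cliques `[0, a)` and `{0} ∪ [a, a + b - 1)`: otherwise it has
non-apex vertices in both cliques, these are non-adjacent, and so all its vertices but the apex
would lie in one part.

With `d = a + b - c`, relabel the copies as follows: stars stay where they are; copies inside
`[0, d)` go to the small clique `{0} ∪ [c, a + b - 1)` of the target; the other copies inside the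
first clique go to the large clique `[0, c)`, with `[d, a)` shifted up to `[b, c)`; copies inside
the second clique go to `[0, b)`. Every relabelling is injective on its piece, and the four kinds of
images are told apart by being stars or not and by their largest vertex.
-/

theorem Nat.card_le_card_of_cover {α β ι : Type*} [Finite β] {p : ι → α → Prop}
    (hp : ∀ x, ∃ i, p i x) (τ : β → ι) (f : ∀ i, {x // p i x} → β)
    (hτ : ∀ i x, τ (f i x) = i) (hf : ∀ i, (f i).Injective) :
    Nat.card α ≤ Nat.card β := by
  choose piece hpiece using hp
  refine Nat.card_le_card_of_injective (fun x => f (piece x) ⟨x, hpiece x⟩) fun x y hxy => ?_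
  have key : ∀ i j (hx : p i x) (hy : p j y), i = j → f i ⟨x, hx⟩ = f j ⟨y, hy⟩ → x = y := by
    rintro i _ hx hy rfl h
    exact congrArg Subtype.val (hf i h)
  exact key _ _ _ _ ((hτ _ _).symm.trans ((congrArg τ hxy).trans (hτ _ _))) hxy

namespace SimpleGraph.Subgraph

variable {V W : Type*} {G : SimpleGraph V} {G' : SimpleGraph W}

def relabel (K : G.Subgraph) (f : V → W) (hf : Set.InjOn f K.verts)
    (hadj : ∀ ⦃u v⦄, K.Adj u v → G'.Adj (f u) (f v)) : K.coe.Copy G' :=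
  ⟨⟨fun v => f v, fun h => hadj h⟩, fun u v h => Subtype.ext (hf u.2 v.2 h)⟩

variable {K L : G.Subgraph} {f : V → W} {hf : Set.InjOn f K.verts}
  {hadj : ∀ ⦃u v⦄, K.Adj u v → G'.Adj (f u) (f v)}

lemma relabel_toSubgraph_verts : (K.relabel f hf hadj).toSubgraph.verts = f '' K.verts := by
  ext; simp [relabel]

lemma relabel_toSubgraph_adj {x y : W} :
    (K.relabel f hf hadj).toSubgraph.Adj x y ↔ ∃ u v, K.Adj u v ∧ f u = x ∧ f v = y := by
  simp only [relabel, Subgraph.map_adj, Relation.Map, top_adj, coe_adj, Subtype.exists]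
  exact ⟨fun ⟨u, _, v, _, h⟩ => ⟨u, v, h⟩,
    fun ⟨u, v, h⟩ => ⟨u, K.edge_vert h.1, v, K.edge_vert h.1.symm, h⟩⟩

lemma adj_iff_exists_of_injOn {S : Set V} (hS : Set.InjOn f S) (hK : K.verts ⊆ S)
    {u v : V} (hu : u ∈ S) (hv : v ∈ S) :
    K.Adj u v ↔ ∃ u' v', K.Adj u' v' ∧ f u' = f u ∧ f v' = f v := by
  refine ⟨fun h => ⟨u, v, h, rfl, rfl⟩, fun ⟨u', v', h, hu', hv'⟩ => ?_⟩
  rwa [← hS (hK (K.edge_vert h)) hu hu', ← hS (hK (K.edge_vert h.symm)) hv hv']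

lemma eq_of_relabel_toSubgraph_eq {S : Set V} (hS : Set.InjOn f S) (hK : K.verts ⊆ S)
    (hL : L.verts ⊆ S) {hfL : Set.InjOn f L.verts}
    {hadjL : ∀ ⦃u v⦄, L.Adj u v → G'.Adj (f u) (f v)}
    (h : (K.relabel f hf hadj).toSubgraph = (L.relabel f hfL hadjL).toSubgraph) : K = L := by
  have himage : f '' K.verts = f '' L.verts := by
    simpa only [relabel_toSubgraph_verts] using congrArg Subgraph.verts h
  have hverts : ∀ v ∈ S, v ∈ K.verts ↔ v ∈ L.verts := fun v hv => by
    rw [← hS.mem_image_iff hK hv, ← hS.mem_image_iff hL hv, himage]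
  have hedges : ∀ u ∈ S, ∀ v ∈ S, K.Adj u v ↔ L.Adj u v := fun u hu v hv => by
    have := congrArg (fun K' : G'.Subgraph => K'.Adj (f u) (f v)) h
    simp only [relabel_toSubgraph_adj, eq_iff_iff] at this
    rwa [adj_iff_exists_of_injOn hS hK hu hv, adj_iff_exists_of_injOn hS hL hu hv]
  ext u v
  · exact ⟨fun hu => (hverts u (hK hu)).1 hu, fun hu => (hverts u (hL hu)).2 hu⟩
  · exact ⟨fun huv => (hedges u (hK (K.edge_vert huv)) v (hK (K.edge_vert huv.symm))).1 huv,
      fun huv => (hedges u (hL (L.edge_vert huv)) v (hL (L.edge_vert huv.symm))).2 huv⟩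

end SimpleGraph.Subgraph

open Subgraph in
theorem copyCount_le_of_cover {α V W ι : Type*} {H : SimpleGraph α} {G : SimpleGraph V}
    {G' : SimpleGraph W} [Finite W] (p : ι → G.Subgraph → Prop) (S : ι → Set V)
    (f : ι → V → W) (τ : G'.Subgraph → ι)
    (hp : ∀ K : G.Subgraph, Nonempty (K.coe ≃g H) → ∃ i, p i K)
    (hS : ∀ i K, p i K → K.verts ⊆ S i) (hf : ∀ i, Set.InjOn (f i) (S i))
    (hadj : ∀ i K, p i K → ∀ ⦃u v⦄, K.Adj u v → G'.Adj (f i u) (f i v))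
    (hτ : ∀ i K (hK : p i K),
      τ (K.relabel (f i) ((hf i).mono (hS i K hK)) (hadj i K hK)).toSubgraph = i) :
    _root_.copyCount H G ≤ _root_.copyCount H G' := by
  refine Nat.card_le_card_of_cover (p := fun i K => p i K.1) (fun K => hp K.1 K.2)
    (fun K' => τ K'.1)
    (fun i K => ⟨(K.1.1.relabel (f i) ((hf i).mono (hS i _ K.2)) (hadj i _ K.2)).toSubgraph,
      K.1.2.map fun e => (Copy.isoToSubgraph _).symm.trans e⟩)
    (fun i K => hτ i K.1.1 K.2) fun i K L h => ?_
  exact Subtype.ext (Subtype.ext (eq_of_relabel_toSubgraph_eq (hf i) (hS i _ K.2) (hS i _ L.2)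
    (congrArg Subtype.val h)))

/-- `joinTwoCliques a b` with the number of vertices as a separate parameter, so that
`joinTwoCliques a b` and `joinTwoCliques c (a + b - c)` live on the same vertex type. -/
def twoCliques (n a : ℕ) : SimpleGraph (Fin n) where
  Adj v w := v ≠ w ∧
    (v.val = 0 ∨ w.val = 0 ∨ (v.val < a ∧ w.val < a) ∨ (a ≤ v.val ∧ a ≤ w.val))
  symm := ⟨fun _ _ h => ⟨Ne.symm h.1, by tauto⟩⟩
  loopless := ⟨fun _ h => h.1 rfl⟩

lemma joinTwoCliques_eq_twoCliques (a b : ℕ) :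
    joinTwoCliques a b = twoCliques (a + b - 1) a := rfl

namespace twoCliques

open Subgraph

variable {n m a b c d : ℕ}

def IdxAdj (a u v : ℕ) : Prop :=
  u ≠ v ∧ (u = 0 ∨ v = 0 ∨ (u < a ∧ v < a) ∨ (a ≤ u ∧ a ≤ v))

lemma adj_iff {v w : Fin n} : (twoCliques n a).Adj v w ↔ IdxAdj a v w := by
  rw [IdxAdj, Fin.val_ne_iff]; rfl

def IsStar {G : SimpleGraph (Fin n)} (K : G.Subgraph) : Prop :=
  ∀ ⦃u v⦄, K.Adj u v → (u : ℕ) = 0 ∨ (v : ℕ) = 0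

lemma exists_mem_verts_ne_zero {G : SimpleGraph (Fin n)} {K : G.Subgraph} (h : ¬IsStar K) :
    ∃ v ∈ K.verts, (v : ℕ) ≠ 0 := by
  obtain ⟨u, v, huv, hu, -⟩ : ∃ u v, K.Adj u v ∧ (u : ℕ) ≠ 0 ∧ (v : ℕ) ≠ 0 := by
    simpa [IsStar] using h
  exact ⟨u, K.edge_vert huv, hu⟩

lemma isStar_relabel_iff {G : SimpleGraph (Fin n)} {G' : SimpleGraph (Fin m)} {K : G.Subgraph}
    {f : Fin n → Fin m} {hf : Set.InjOn f K.verts}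
    {hadj : ∀ ⦃u v⦄, K.Adj u v → G'.Adj (f u) (f v)}
    (h0 : ∀ v ∈ K.verts, (f v : ℕ) = 0 ↔ (v : ℕ) = 0) :
    IsStar (K.relabel f hf hadj).toSubgraph ↔ IsStar K := by
  simp only [IsStar, relabel_toSubgraph_adj]
  constructor
  · intro h u v huv
    rw [← h0 u (K.edge_vert huv), ← h0 v (K.edge_vert huv.symm)]
    exact h ⟨u, v, huv, rfl, rfl⟩
  · rintro h _ _ ⟨u, v, huv, rfl, rfl⟩
    rw [h0 u (K.edge_vert huv), h0 v (K.edge_vert huv.symm)]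
    exact h huv

lemma verts_subset_or_of_not_isStar {K : (twoCliques n a).Subgraph}
    (hK : K.coe.IsCompleteMultipartite) (hstar : ¬IsStar K) :
    (∀ v ∈ K.verts, (v : ℕ) < a) ∨ ∀ v ∈ K.verts, (v : ℕ) = 0 ∨ a ≤ v := by
  by_contra! ⟨⟨w, hw, haw⟩, ⟨u, hu, hu0, hua⟩⟩
  obtain ⟨x, y, hxy, hx0, hy0⟩ : ∃ x y, K.Adj x y ∧ (x : ℕ) ≠ 0 ∧ (y : ℕ) ≠ 0 := by
    simpa [IsStar] using hstar
  have nonadj_trans : ∀ x y z (hx : x ∈ K.verts) (hy : y ∈ K.verts) (hz : z ∈ K.verts),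
      ¬K.Adj x y → ¬K.Adj y z → ¬K.Adj x z := fun x y z hx hy hz =>
    hK.trans ⟨x, hx⟩ ⟨y, hy⟩ ⟨z, hz⟩
  have nonadj_of_not_adj : ∀ x y : Fin n, ¬IdxAdj a x y → ¬K.Adj x y :=
    fun x y h h' => h (adj_iff.1 (K.adj_sub h'))
  have hwu : ¬K.Adj w u := nonadj_of_not_adj _ _ (by simp only [IdxAdj]; omega)
  -- every vertex other than the apex lies in the part of `u`
  have hpart : ∀ z ∈ K.verts, (z : ℕ) ≠ 0 → ¬K.Adj z u := by
    intro z hz hz0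
    by_cases hza : (z : ℕ) < a
    · exact nonadj_trans z w u hz hw hu (nonadj_of_not_adj _ _ (by simp only [IdxAdj]; omega)) hwu
    · exact nonadj_of_not_adj _ _ (by simp only [IdxAdj]; omega)
  exact nonadj_trans x u y (K.edge_vert hxy) hu (K.edge_vert hxy.symm)
    (hpart x (K.edge_vert hxy) hx0) (fun h => hpart y (K.edge_vert hxy.symm) hy0 h.symm) hxy

inductive Kind | star | firstLow | firstHigh | second

def region (a d : ℕ) : Kind → Set ℕ
  | .star => Set.univ
  | .firstLow => Set.Iio d
  | .firstHigh => Set.Iio a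
  | .second => {v | v = 0 ∨ a ≤ v}

def IsOfKind (a d : ℕ) (k : Kind) (K : (twoCliques n a).Subgraph) : Prop :=
  match k with
  | .star => IsStar K
  | .firstHigh => ¬IsStar K ∧ K.verts ⊆ Fin.val ⁻¹' region a d k ∧ ∃ v ∈ K.verts, d ≤ (v : ℕ)
  | _ => ¬IsStar K ∧ K.verts ⊆ Fin.val ⁻¹' region a d k

lemma IsOfKind.verts_subset {k : Kind} {K : (twoCliques n a).Subgraph} (hK : IsOfKind a d k K) :
    K.verts ⊆ Fin.val ⁻¹' region a d k := by
  cases k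
  exacts [fun _ _ => Set.mem_univ _, hK.2, hK.2.1, hK.2]

/- With `b = n + 1 - a` and `d = n + 1 - c`: `firstLow` moves `[1, d)` onto the small clique
`[c, n)` of `twoCliques n c`, `firstHigh` moves `[d, a)` up to `[b, c)`, and `second` moves
`[a, n)` down onto `[1, b)`. -/
def shift (a c d : ℕ) : Kind → ℕ → ℕ
  | .star => id
  | .firstLow => fun v => if v = 0 then 0 else v + (c - 1)
  | .firstHigh => fun v => if v < d then v else v + (c - a)
  | .second => fun v => v - (a - 1)

lemma shift_lt (hcd : c + d = n + 1) (hd : 0 < d) (k : Kind) {v : ℕ}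
    (hv : v ∈ region a d k) (hvn : v < n) : shift a c d k v < n := by
  cases k <;> simp only [shift, region, Set.mem_Iio, Set.mem_ofPred_eq, id] at hv ⊢ <;>
    (try split_ifs) <;> omega

lemma injOn_shift (k : Kind) : Set.InjOn (shift a c d k) (region a d k) := by
  intro u hu v hv h
  cases k <;> simp only [shift, region, Set.mem_Iio, Set.mem_ofPred_eq, id] at hu hv h <;>
    (try split_ifs at h) <;> omega

lemma shift_eq_zero_iff (hd : 0 < d) (k : Kind) {v : ℕ} (hv : v ∈ region a d k) :
    shift a c d k v = 0 ↔ v = 0 := by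
  cases k <;> simp only [shift, region, Set.mem_Iio, Set.mem_ofPred_eq, id] at hv ⊢ <;>
    (try split_ifs) <;> omega

lemma idxAdj_shift (hab : a + b = n + 1) (hac : a ≤ c) (hbc : b ≤ c) (k : Kind)
    (hk : k ≠ .star) {u v : ℕ} (hu : u ∈ region a d k) (hv : v ∈ region a d k) (hun : u < n)
    (hvn : v < n) (hadj : IdxAdj a u v) : IdxAdj c (shift a c d k u) (shift a c d k v) := by
  cases k <;>
    simp only [IdxAdj, shift, region, Set.mem_Iio, Set.mem_ofPred_eq, id] at hu hv hadj ⊢ <;>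
    first | exact absurd rfl hk | (try split_ifs) <;> omega

def relabelMap (n a c d : ℕ) (k : Kind) (v : Fin n) : Fin n :=
  if h : shift a c d k v < n then ⟨_, h⟩ else v

lemma val_relabelMap (hcd : c + d = n + 1) (hd : 0 < d) {k : Kind} {v : Fin n}
    (hv : (v : ℕ) ∈ region a d k) : (relabelMap n a c d k v : ℕ) = shift a c d k v :=
  congrArg Fin.val (dif_pos (shift_lt hcd hd k hv v.isLt))

lemma injOn_relabelMap (hcd : c + d = n + 1) (hd : 0 < d) (k : Kind) :
    Set.InjOn (relabelMap n a c d k) (Fin.val ⁻¹' region a d k) := fun u hu v hv h =>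
  Fin.ext (injOn_shift k hu hv (by
    rw [← val_relabelMap hcd hd hu, ← val_relabelMap hcd hd hv, h]))

lemma adj_relabelMap (hab : a + b = n + 1) (hcd : c + d = n + 1) (hac : a ≤ c) (hbc : b ≤ c)
    (hd : 0 < d) {k : Kind} {K : (twoCliques n a).Subgraph} (hK : IsOfKind a d k K)
    {u v : Fin n} (huv : K.Adj u v) :
    (twoCliques n c).Adj (relabelMap n a c d k u) (relabelMap n a c d k v) := by
  have hu := hK.verts_subset (K.edge_vert huv)
  have hv := hK.verts_subset (K.edge_vert huv.symm)
  have hG := adj_iff.1 (K.adj_sub huv)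
  rw [adj_iff, val_relabelMap hcd hd hu, val_relabelMap hcd hd hv]
  cases k
  case star =>
    have := hK huv
    simp only [IdxAdj, shift, id] at hG ⊢
    omega
  all_goals exact idxAdj_shift hab hac hbc _ (by simp) hu hv u.isLt v.isLt hG

open Classical in
noncomputable def kind (b c : ℕ) {G : SimpleGraph (Fin n)} (K : G.Subgraph) : Kind :=
  if IsStar K then .star
  else if ∃ v ∈ K.verts, c ≤ (v : ℕ) then .firstLow
  else if ∃ v ∈ K.verts, b ≤ (v : ℕ) then .firstHigh
  else .second

lemma kind_relabel (hab : a + b = n + 1) (hcd : c + d = n + 1) (hac : a ≤ c) (hbc : b ≤ c)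
    (hd : 0 < d) {k : Kind} {K : (twoCliques n a).Subgraph} (hK : IsOfKind a d k K)
    {hf : Set.InjOn (relabelMap n a c d k) K.verts}
    {hadj : ∀ ⦃u v⦄, K.Adj u v → (twoCliques n c).Adj (relabelMap n a c d k u)
      (relabelMap n a c d k v)} :
    kind b c (K.relabel (relabelMap n a c d k) hf hadj).toSubgraph = k := by
  have hregion : ∀ v ∈ K.verts, (v : ℕ) ∈ region a d k := fun v hv => hK.verts_subset hv
  have hval : ∀ v ∈ K.verts, (relabelMap n a c d k v : ℕ) = shift a c d k v :=
    fun v hv => val_relabelMap hcd hd (hregion v hv)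
  have hstar : IsStar (K.relabel (relabelMap n a c d k) hf hadj).toSubgraph ↔ IsStar K :=
    isStar_relabel_iff fun v hv => by
      rw [hval v hv]; exact shift_eq_zero_iff hd k (hregion v hv)
  have hexists : ∀ t, (∃ w ∈ (K.relabel (relabelMap n a c d k) hf hadj).toSubgraph.verts,
      t ≤ (w : ℕ)) ↔ ∃ v ∈ K.verts, t ≤ shift a c d k v := fun t => by
    rw [relabel_toSubgraph_verts, Set.exists_mem_image]
    exact exists_congr fun v => and_congr_right fun hv => by rw [hval v hv]
  cases k
  case star => rw [kind, if_pos (hstar.2 hK)]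
  case firstLow =>
    obtain ⟨v, hv, hv0⟩ := exists_mem_verts_ne_zero hK.1
    rw [kind, if_neg (hstar.not.2 hK.1),
      if_pos ((hexists c).2 ⟨v, hv, by simp only [shift, if_neg hv0]; omega⟩)]
  case firstHigh =>
    obtain ⟨v, hv, hdv⟩ := hK.2.2
    have hva : (v : ℕ) < a := hregion v hv
    rw [kind, if_neg (hstar.not.2 hK.1), if_neg, if_pos ((hexists b).2 ⟨v, hv, ?_⟩)]
    · simp only [shift, if_neg (not_lt.2 hdv)]
      omega
    · rw [hexists]
      rintro ⟨w, hw, hcw⟩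
      have hwa : (w : ℕ) < a := hregion w hw
      simp only [shift] at hcw
      split_ifs at hcw <;> omega
  case second =>
    rw [kind, if_neg (hstar.not.2 hK.1), if_neg, if_neg] <;> rw [hexists] <;>
      rintro ⟨w, hw, hcw⟩ <;> have hw' := hregion w hw <;> have := w.isLt <;>
      simp only [shift, region, Set.mem_ofPred_eq] at hcw hw' <;> omega

theorem copyCount_le {α : Type*} {H : SimpleGraph α} (hH : H.IsCompleteMultipartite)
    (hab : a + b = n + 1) (hcd : c + d = n + 1) (hac : a ≤ c) (hbc : b ≤ c) (hd : 0 < d) :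
    _root_.copyCount H (twoCliques n a) ≤ _root_.copyCount H (twoCliques n c) := by
  refine copyCount_le_of_cover (IsOfKind a d) (fun k => Fin.val ⁻¹' region a d k)
    (relabelMap n a c d) (kind b c) (fun K ⟨e⟩ => ?_) (fun k K hK => hK.verts_subset)
    (injOn_relabelMap hcd hd) (fun k K hK u v => adj_relabelMap hab hcd hac hbc hd hK)
    (fun k K hK => kind_relabel hab hcd hac hbc hd hK)
  by_cases hstar : IsStar K
  · exact ⟨.star, hstar⟩
  rcases verts_subset_or_of_not_isStar (hH.comap e.toEmbedding) hstar with hfirst | hsecond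
  · by_cases hhigh : ∃ v ∈ K.verts, d ≤ (v : ℕ)
    · exact ⟨.firstHigh, hstar, hfirst, hhigh⟩
    · simp only [not_exists, not_and, not_le] at hhigh
      exact ⟨.firstLow, hstar, hhigh⟩
  · exact ⟨.second, hstar, hsecond⟩

end twoCliques

theorem statement_6_general (a b c s : ℕ) (r : Fin s → ℕ)
    (hab : a ≤ b) (hbc : b ≤ c) (habc : c + 2 ≤ a + b) :
    _root_.copyCount (KR r) (joinTwoCliques a b) ≤
      _root_.copyCount (KR r) (joinTwoCliques c (a + b - c)) := by
  rw [joinTwoCliques_eq_twoCliques, joinTwoCliques_eq_twoCliques,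
    show c + (a + b - c) - 1 = a + b - 1 by omega]
  exact twoCliques.copyCount_le (b := b) (d := a + b - c)
    (completeMultipartiteGraph.isCompleteMultipartite _) (by omega) (by omega) (by omega) hbc
    (by omega)

/-- If `a ≤ b ≤ c` and `a + b ≥ c + 2`, then `N(K_{r_1,…,r_s}, K_1 ∨ (K_{a-1} + K_{b-1}))
≤ N(K_{r_1,…,r_s}, K_1 ∨ (K_{c-1} + K_{a+b-c-1}))`. -/
theorem statement_6 (a b c s : ℕ) (r : Fin s → ℕ)
    (ha : 0 < a) (hb : 0 < b) (hc : 0 < c) (hs : 0 < s) (hr : ∀ i, 0 < r i)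
    (hab : a ≤ b) (hbc : b ≤ c) (habc : c + 2 ≤ a + b) :
    _root_.copyCount (KR r) (joinTwoCliques a b) ≤
      _root_.copyCount (KR r) (joinTwoCliques c (a + b - c)) :=
  statement_6_general a b c s r hab hbc habc
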